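/- arXiv:2302.04743 — 2 statements merged into one kernel-verified Lean document; each statement's English description precedes it below -/
import Mathlib

section
/- Let θ0, θ0′ be real numbers, let D, D′ ⊆ ℝ with θ0 ∉ D and θ0′ ∉ D′, and let (α, β) and (α′, β′) be two pairs of real functions such that α(θ) ≠ α(θ0) on D, α′(θ) ≠ α′(θ0′) on D′, and both maps θ ↦ (β(θ) − β(θ0))/(α(θ) − α(θ0)) on D and θ ↦ (β′(θ) − β′(θ0′))/(α′(θ) − α′(θ0′)) on D′ are strictly monotone increasing. Let g₁, …, g_T be real numbers. For 0 ≤ τ < T let θ₁^{τ} ∈ D satisfy [α(θ₁^{τ}) − α(θ0)] · Σ_{t=τ+1}^{T} g_t − [β(θ₁^{τ}) − β(θ0)] · (T − τ) = 0, and let ψ₁^{τ} ∈ D′ satisfy [α′(ψ₁^{τ}) − α′(θ0′)] · Σ_{t=τ+1}^{T} g_t − [β′(ψ₁^{τ}) − β′(θ0′)] · (T − τ) = 0. Then for all 0 ≤ τ_i < τ_j < T, the sign of θ₁^{τ_i} − θ₁^{τ_j} equals the sign of ψ₁^{τ_i} − ψ₁^{τ_j}. -/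
/-! Dividing the root equation of the log-likelihood-ratio curve by `(α θ₁ - α θ₀) (T - τ)` shows
that the root `θ₁^τ` is the point where `(β θ - β θ₀) / (α θ - α θ₀)` takes the value
`(∑_{t ∈ (τ, T]} g_t) / (T - τ)`, which does not depend on the family. Both ratio maps being
strictly increasing, the roots of the two families are compared exactly as these common values. -/

open Finset

theorem div_eq_div_of_mul_sub_mul_eq_zero {K : Type*} [Field K] {a b s c : K}
    (ha : a ≠ 0) (hc : c ≠ 0) (h : a * s - b * c = 0) : b / a = s / c :=
  (div_eq_div_iff ha hc).mpr (by linear_combination -h)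

theorem cmp_eq_cmp_of_strictMonoOn {α β γ : Type*} [LinearOrder α] [LinearOrder β]
    [LinearOrder γ] {f : α → γ} {f' : β → γ} {s : Set α} {s' : Set β}
    (hf : StrictMonoOn f s) (hf' : StrictMonoOn f' s') {x y : α} {x' y' : β}
    (hx : x ∈ s) (hy : y ∈ s) (hx' : x' ∈ s') (hy' : y' ∈ s')
    (hxx' : f x = f' x') (hyy' : f y = f' y') : cmp x y = cmp x' y' := by
  rw [← hf.cmp_map_eq hx hy, ← hf'.cmp_map_eq hx' hy', hxx', hyy']

theorem llr_root_ratio_eq_mean {α β : ℝ → ℝ} {θ0 θ : ℝ} {T τ : ℕ} {g : ℕ → ℝ}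
    (hα : α θ ≠ α θ0) (hτ : τ < T)
    (hroot : (α θ - α θ0) * (∑ t ∈ Ioc τ T, g t) - (β θ - β θ0) * ((T : ℝ) - τ) = 0) :
    (β θ - β θ0) / (α θ - α θ0) = (∑ t ∈ Ioc τ T, g t) / ((T : ℝ) - τ) := by
  have hτ' : (τ : ℝ) < T := by exact_mod_cast hτ
  exact div_eq_div_of_mul_sub_mul_eq_zero (sub_ne_zero.mpr hα) (by linarith) hroot

theorem focus_same_pruning_across_exponential_families_general
    (θ0 θ0' : ℝ) (D D' : Set ℝ)
    (α β α' β' : ℝ → ℝ)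
    (hα : ∀ θ ∈ D, α θ ≠ α θ0)
    (hα' : ∀ θ ∈ D', α' θ ≠ α' θ0')
    (hmono : StrictMonoOn (fun θ => (β θ - β θ0) / (α θ - α θ0)) D)
    (hmono' : StrictMonoOn (fun θ => (β' θ - β' θ0') / (α' θ - α' θ0')) D')
    (T : ℕ) (g : ℕ → ℝ)
    (θ1 ψ1 : ℕ → ℝ)
    (hθ1mem : ∀ τ < T, θ1 τ ∈ D)
    (hψ1mem : ∀ τ < T, ψ1 τ ∈ D')
    (hθ1root : ∀ τ < T, (α (θ1 τ) - α θ0) * (∑ t ∈ Finset.Ioc τ T, g t)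
        - (β (θ1 τ) - β θ0) * ((T : ℝ) - τ) = 0)
    (hψ1root : ∀ τ < T, (α' (ψ1 τ) - α' θ0') * (∑ t ∈ Finset.Ioc τ T, g t)
        - (β' (ψ1 τ) - β' θ0') * ((T : ℝ) - τ) = 0) :
    ∀ τi τj : ℕ, τi < τj → τj < T →
      ((θ1 τi > θ1 τj ↔ ψ1 τi > ψ1 τj) ∧
       (θ1 τi = θ1 τj ↔ ψ1 τi = ψ1 τj) ∧
       (θ1 τi < θ1 τj ↔ ψ1 τi < ψ1 τj)) := by
  have ratio_eq : ∀ τ < T, (β (θ1 τ) - β θ0) / (α (θ1 τ) - α θ0)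
      = (β' (ψ1 τ) - β' θ0') / (α' (ψ1 τ) - α' θ0') := fun τ hτ =>
    (llr_root_ratio_eq_mean (hα _ (hθ1mem τ hτ)) hτ (hθ1root τ hτ)).trans
      (llr_root_ratio_eq_mean (hα' _ (hψ1mem τ hτ)) hτ (hψ1root τ hτ)).symm
  intro τi τj hij hjT
  have hiT : τi < T := hij.trans hjT
  have hcmp : cmp (θ1 τi) (θ1 τj) = cmp (ψ1 τi) (ψ1 τj) :=
    cmp_eq_cmp_of_strictMonoOn hmono hmono' (hθ1mem τi hiT) (hθ1mem τj hjT)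
      (hψ1mem τi hiT) (hψ1mem τj hjT) (ratio_eq τi hiT) (ratio_eq τj hjT)
  exact ⟨lt_iff_lt_of_cmp_eq_cmp (cmp_eq_cmp_symm.mp hcmp), eq_iff_eq_of_cmp_eq_cmp hcmp,
    lt_iff_lt_of_cmp_eq_cmp hcmp⟩

theorem focus_same_pruning_across_exponential_families
    (θ0 θ0' : ℝ) (D D' : Set ℝ) (hθ0 : θ0 ∉ D) (hθ0' : θ0' ∉ D')
    (α β α' β' : ℝ → ℝ)
    (hα : ∀ θ ∈ D, α θ ≠ α θ0)
    (hα' : ∀ θ ∈ D', α' θ ≠ α' θ0')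
    (hmono : StrictMonoOn (fun θ => (β θ - β θ0) / (α θ - α θ0)) D)
    (hmono' : StrictMonoOn (fun θ => (β' θ - β' θ0') / (α' θ - α' θ0')) D')
    (T : ℕ) (g : ℕ → ℝ)
    (θ1 ψ1 : ℕ → ℝ)
    (hθ1mem : ∀ τ < T, θ1 τ ∈ D)
    (hψ1mem : ∀ τ < T, ψ1 τ ∈ D')
    (hθ1root : ∀ τ < T, (α (θ1 τ) - α θ0) * (∑ t ∈ Finset.Ioc τ T, g t)
        - (β (θ1 τ) - β θ0) * ((T : ℝ) - τ) = 0)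
    (hψ1root : ∀ τ < T, (α' (ψ1 τ) - α' θ0') * (∑ t ∈ Finset.Ioc τ T, g t)
        - (β' (ψ1 τ) - β' θ0') * ((T : ℝ) - τ) = 0) :
    ∀ τi τj : ℕ, τi < τj → τj < T →
      ((θ1 τi > θ1 τj ↔ ψ1 τi > ψ1 τj) ∧
       (θ1 τi = θ1 τj ↔ ψ1 τi = ψ1 τj) ∧
       (θ1 τi < θ1 τj ↔ ψ1 τi < ψ1 τj)) :=
  focus_same_pruning_across_exponential_families_general θ0 θ0' D D' α β α' β' hα hα' hmono hmono' T
    g θ1 ψ1 hθ1mem hψ1mem hθ1root hψ1root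
end

section
/- Let Θ be a nonempty type, H0 ⊆ Θ and Θ1 ⊆ Θ nonempty subsets with H0 ⊆ Θ1, and L : ℕ → Θ → ℝ a function. For natural numbers i < j define m_{i,j} = sup_{θ0 ∈ H0, θ1 ∈ Θ1} [Σ_{t=1}^{i} L t θ0 + Σ_{t=i+1}^{j} L t θ1] − sup_{θ0 ∈ H0} Σ_{t=1}^{j} L t θ0, assuming all suprema appearing are finite. Then for any 0 ≤ τ₁ < τ₂ < … < τ_n < T and any fixed 1 ≤ k ≤ n, one has m_{τ_k, T} ≤ Σ_{i=1}^{n−1} m_{τ_i, τ_{i+1}} + m_{τ_n, T}. -/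
/-!
Splitting the post-change segment `(i, T]` at `j` and keeping the same post-change
parameter on both pieces shows `m_{i,T} ≤ m_{i,j} + m_{j,T}` for `i ≤ j ≤ T`: the no-change fit
up to `j` followed by that parameter is itself a two-segment fit with change at `j`. Iterating
this along `τ_k < … < τ_n < T` gives the tail of the sum, and the remaining terms
`m_{τ_i, τ_{i+1}}`, `i < k`, are nonnegative because `H0 ⊆ Θ1` lets the post-change parameter
equal the pre-change one.
-/

open Finset

/-- The likelihood-ratio statistic for a single change at time `i` using data up to time `j`:
the maximized two-segment log-likelihood (pre-change parameter in `H0`, post-change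
parameter in `Θ1`) minus the maximized no-change log-likelihood. -/
noncomputable def changeLRStat {Θ : Type*} (H0 Θ1 : Set Θ) (L : ℕ → Θ → ℝ) (i j : ℕ) : ℝ :=
  sSup {v : ℝ | ∃ θ0 ∈ H0, ∃ θ1 ∈ Θ1,
      v = (∑ t ∈ Finset.Icc 1 i, L t θ0) + ∑ t ∈ Finset.Ioc i j, L t θ1}
    - sSup {v : ℝ | ∃ θ0 ∈ H0, v = ∑ t ∈ Finset.Icc 1 j, L t θ0}

theorem le_sum_Ico_add_of_subadditive (m : ℕ → ℕ → ℝ)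
    (hm : ∀ a b c, a ≤ b → b ≤ c → m a c ≤ m a b + m b c)
    (τ : ℕ → ℕ) (T k n : ℕ) (hkn : k ≤ n) (hτ : ∀ i ∈ Ico k n, τ i ≤ τ (i + 1))
    (hT : τ n ≤ T) :
    m (τ k) T ≤ (∑ i ∈ Ico k n, m (τ i) (τ (i + 1))) + m (τ n) T := by
  induction n, hkn using Nat.le_induction with
  | base => simp
  | succ n hkn ih =>
    have hstep : τ n ≤ τ (n + 1) := hτ n (by simp [hkn])
    have ih := ih (fun i hi => hτ i (by simp at hi ⊢; omega)) (hstep.trans hT)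
    rw [sum_Ico_succ_top hkn]
    linarith [hm _ _ _ hstep hT]

theorem sum_Icc_one_add_sum_Ioc {M : Type*} [AddCommMonoid M] (f : ℕ → M) {i j : ℕ} (hij : i ≤ j) :
    (∑ t ∈ Icc 1 i, f t) + ∑ t ∈ Ioc i j, f t = ∑ t ∈ Icc 1 j, f t := by
  have h := sum_Ioc_consecutive f (Nat.zero_le i) hij
  rwa [← Icc_add_one_left_eq_Ioc, zero_add] at h

section LikelihoodRatio

variable {Θ : Type*} (H0 Θ1 : Set Θ) (L : ℕ → Θ → ℝ)

def changeLogLikSet (i j : ℕ) : Set ℝ :=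
  {v | ∃ θ0 ∈ H0, ∃ θ1 ∈ Θ1, v = (∑ t ∈ Icc 1 i, L t θ0) + ∑ t ∈ Ioc i j, L t θ1}

def nullLogLikSet (j : ℕ) : Set ℝ :=
  {v | ∃ θ0 ∈ H0, v = ∑ t ∈ Icc 1 j, L t θ0}

theorem changeLRStat_eq (i j : ℕ) :
    changeLRStat H0 Θ1 L i j = sSup (changeLogLikSet H0 Θ1 L i j) - sSup (nullLogLikSet H0 L j) :=
  rfl

variable {H0 Θ1 L}

theorem sSup_nullLogLikSet_add_le {j T : ℕ} (hH0 : H0.Nonempty)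
    (hbdd : BddAbove (changeLogLikSet H0 Θ1 L j T)) {θ1 : Θ} (hθ1 : θ1 ∈ Θ1) :
    sSup (nullLogLikSet H0 L j) + ∑ t ∈ Ioc j T, L t θ1 ≤ sSup (changeLogLikSet H0 Θ1 L j T) := by
  rw [← le_sub_iff_add_le]
  obtain ⟨θ0, hθ0⟩ := hH0
  refine csSup_le ⟨_, θ0, hθ0, rfl⟩ ?_
  rintro _ ⟨θ0', hθ0', rfl⟩
  rw [le_sub_iff_add_le]
  exact le_csSup hbdd ⟨θ0', hθ0', θ1, hθ1, rfl⟩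

theorem sSup_changeLogLikSet_le (hH0 : H0.Nonempty) (hΘ1 : Θ1.Nonempty)
    (hbdd : ∀ i j, BddAbove (changeLogLikSet H0 Θ1 L i j)) {i j T : ℕ} (hij : i ≤ j)
    (hjT : j ≤ T) :
    sSup (changeLogLikSet H0 Θ1 L i T)
      ≤ sSup (changeLogLikSet H0 Θ1 L i j)
        + (sSup (changeLogLikSet H0 Θ1 L j T) - sSup (nullLogLikSet H0 L j)) := by
  obtain ⟨θ0, hθ0⟩ := hH0
  obtain ⟨θ1, hθ1⟩ := hΘ1
  refine csSup_le ⟨_, θ0, hθ0, θ1, hθ1, rfl⟩ ?_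
  rintro _ ⟨θ0, hθ0, θ1, hθ1, rfl⟩
  have hfirst := le_csSup (hbdd i j) ⟨θ0, hθ0, θ1, hθ1, rfl⟩
  have hsecond := sSup_nullLogLikSet_add_le ⟨θ0, hθ0⟩ (hbdd j T) hθ1
  rw [← sum_Ioc_consecutive _ hij hjT]
  linarith

theorem changeLRStat_le_add (hH0 : H0.Nonempty) (hΘ1 : Θ1.Nonempty)
    (hbdd : ∀ i j, BddAbove (changeLogLikSet H0 Θ1 L i j)) {i j T : ℕ} (hij : i ≤ j)
    (hjT : j ≤ T) :
    changeLRStat H0 Θ1 L i T ≤ changeLRStat H0 Θ1 L i j + changeLRStat H0 Θ1 L j T := by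
  simp only [changeLRStat_eq]
  linarith [sSup_changeLogLikSet_le hH0 hΘ1 hbdd hij hjT]

theorem changeLRStat_nonneg {i j : ℕ} (hH0 : H0.Nonempty) (hsub : H0 ⊆ Θ1)
    (hbdd : BddAbove (changeLogLikSet H0 Θ1 L i j)) (hij : i ≤ j) :
    0 ≤ changeLRStat H0 Θ1 L i j := by
  rw [changeLRStat_eq, sub_nonneg]
  obtain ⟨θ0, hθ0⟩ := hH0
  refine csSup_le ⟨_, θ0, hθ0, rfl⟩ ?_
  rintro _ ⟨θ0, hθ0, rfl⟩
  rw [← sum_Icc_one_add_sum_Ioc _ hij]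
  exact le_csSup hbdd ⟨θ0, hθ0, θ0, hsub hθ0, rfl⟩

end LikelihoodRatio

theorem focus_prop2_pointwise_telescoping_general
    {Θ : Type*} (H0 Θ1 : Set Θ)
    (hH0 : H0.Nonempty) (hΘ1 : Θ1.Nonempty) (hsub : H0 ⊆ Θ1)
    (L : ℕ → Θ → ℝ)
    (hbdd2 : ∀ i j : ℕ, BddAbove {v : ℝ | ∃ θ0 ∈ H0, ∃ θ1 ∈ Θ1,
        v = (∑ t ∈ Finset.Icc 1 i, L t θ0) + ∑ t ∈ Finset.Ioc i j, L t θ1})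
    (n T : ℕ) (τ : ℕ → ℕ)
    (hτmono : ∀ i, 1 ≤ i → i < n → τ i < τ (i + 1))
    (hτT : τ n < T)
    (k : ℕ) (hk1 : 1 ≤ k) (hkn : k ≤ n) :
    changeLRStat H0 Θ1 L (τ k) T
      ≤ (∑ i ∈ Finset.Ico 1 n, changeLRStat H0 Θ1 L (τ i) (τ (i + 1)))
        + changeLRStat H0 Θ1 L (τ n) T := by
  have hstep : ∀ i ∈ Ico 1 n, τ i ≤ τ (i + 1) := fun i hi =>
    (hτmono i (mem_Ico.1 hi).1 (mem_Ico.1 hi).2).le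
  have htail := le_sum_Ico_add_of_subadditive (changeLRStat H0 Θ1 L)
    (fun _ _ _ => changeLRStat_le_add hH0 hΘ1 hbdd2) τ T k n hkn
    (fun i hi => hstep i (Ico_subset_Ico_left hk1 hi)) hτT.le
  have hhead : 0 ≤ ∑ i ∈ Ico 1 k, changeLRStat H0 Θ1 L (τ i) (τ (i + 1)) :=
    sum_nonneg fun i hi =>
      changeLRStat_nonneg hH0 hsub (hbdd2 _ _) (hstep i (Ico_subset_Ico_right hkn hi))
  rw [← sum_Ico_consecutive _ hk1 hkn]
  linarith

theorem focus_prop2_pointwise_telescoping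
    {Θ : Type*} [Nonempty Θ] (H0 Θ1 : Set Θ)
    (hH0 : H0.Nonempty) (hΘ1 : Θ1.Nonempty) (hsub : H0 ⊆ Θ1)
    (L : ℕ → Θ → ℝ)
    (hbdd2 : ∀ i j : ℕ, BddAbove {v : ℝ | ∃ θ0 ∈ H0, ∃ θ1 ∈ Θ1,
        v = (∑ t ∈ Finset.Icc 1 i, L t θ0) + ∑ t ∈ Finset.Ioc i j, L t θ1})
    (hbdd1 : ∀ j : ℕ, BddAbove {v : ℝ | ∃ θ0 ∈ H0, v = ∑ t ∈ Finset.Icc 1 j, L t θ0})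
    (n T : ℕ) (hn : 1 ≤ n) (τ : ℕ → ℕ)
    (hτmono : ∀ i, 1 ≤ i → i < n → τ i < τ (i + 1))
    (hτT : τ n < T)
    (k : ℕ) (hk1 : 1 ≤ k) (hkn : k ≤ n) :
    changeLRStat H0 Θ1 L (τ k) T
      ≤ (∑ i ∈ Finset.Ico 1 n, changeLRStat H0 Θ1 L (τ i) (τ (i + 1)))
        + changeLRStat H0 Θ1 L (τ n) T :=
  focus_prop2_pointwise_telescoping_general H0 Θ1 hH0 hΘ1 hsub L hbdd2 n T τ hτmono hτT k hk1 hkn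
end
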